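/- arXiv:2305.04918 — 4 statements merged into one kernel-verified Lean document; each statement's English description precedes it below -/
import Mathlib

section
/- Let a bi-matrix game on n ≥ 2 pure strategies have all payoff entries in [0,1], and suppose (z*, z*) is a Nash equilibrium (a symmetric equilibrium) such that some pure strategy t satisfies z*ₜ ≥ δ for some δ > 0. Then there exists z⁻ ∈ Δₙ with ‖z* − z⁻‖₁ ≥ 2δ such that both (z⁻, z*) and (z*, z⁻) are 2δ-Nash equilibria of the game. -/
/-!
Shift mass `δ` of `z` from `t` to some other pure strategy `s`. Since all payoff entries
lie in `[0, 1]`, moving mass `δ` between two pure strategies changes any expected payoff by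
at most `δ`, so each equilibrium inequality of `(z, z)` is violated by at most `2δ` at the
shifted profiles, while the shifted strategy lies at `L¹`-distance exactly `2δ` from `z`.
-/

open Finset

/-- The probability simplex over a finite strategy set `S`. -/
def simplex (S : Type*) [Fintype S] : Set (S → ℝ) :=
  {x | (∀ i, 0 ≤ x i) ∧ ∑ i, x i = 1}

/-- Expected payoff `Σᵢⱼ xᵢ yⱼ A i j`. -/
def payoff {S : Type*} [Fintype S] (A : S → S → ℝ) (x y : S → ℝ) : ℝ :=
  ∑ i, ∑ j, x i * y j * A i j

/-- The point mass at pure strategy `s`. -/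
def pureStrat {S : Type*} [DecidableEq S] (s : S) : S → ℝ :=
  fun i => if i = s then 1 else 0

/-- Support of a mixed strategy. -/
def supp {S : Type*} (x : S → ℝ) : Set S := {i | 0 < x i}

/-- L1 distance between mixed strategies. -/
def dist1 {S : Type*} [Fintype S] (x y : S → ℝ) : ℝ := ∑ i, |x i - y i|

/-- `(x, y)` is an ε-Nash equilibrium of the bi-matrix game `(R, C)`. -/
def IsEpsNash {S : Type*} [Fintype S] [DecidableEq S]
    (R C : S → S → ℝ) (x y : S → ℝ) (ε : ℝ) : Prop :=
  x ∈ simplex S ∧ y ∈ simplex S ∧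
  (∀ s : S, payoff R (pureStrat s) y ≤ payoff R x y + ε) ∧
  (∀ s : S, payoff C x (pureStrat s) ≤ payoff C x y + ε)

open Matrix

section

variable {S : Type*} [Fintype S]

lemma pureStrat_mem_simplex [DecidableEq S] (s : S) : pureStrat s ∈ simplex S := by
  refine ⟨fun i => ?_, by simp [pureStrat]⟩
  unfold pureStrat
  split_ifs <;> norm_num

lemma payoff_eq_dotProduct (A : S → S → ℝ) (x y : S → ℝ) :
    payoff A x y = x ⬝ᵥ (Matrix.of A *ᵥ y) := by
  simp only [payoff, dotProduct, mulVec, of_apply, mul_sum]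
  exact sum_congr rfl fun i _ => sum_congr rfl fun j _ => by ring

lemma payoff_mem_Icc {A : S → S → ℝ} (hA : ∀ i j, A i j ∈ Set.Icc (0 : ℝ) 1)
    {x y : S → ℝ} (hx : x ∈ simplex S) (hy : y ∈ simplex S) :
    payoff A x y ∈ Set.Icc (0 : ℝ) 1 := by
  constructor
  · exact sum_nonneg fun i _ => sum_nonneg fun j _ =>
      mul_nonneg (mul_nonneg (hx.1 i) (hy.1 j)) (hA i j).1
  · calc payoff A x y ≤ ∑ i, ∑ j, x i * y j :=
          sum_le_sum fun i _ => sum_le_sum fun j _ =>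
            mul_le_of_le_one_right (mul_nonneg (hx.1 i) (hy.1 j)) (hA i j).2
      _ = 1 := by rw [← sum_mul_sum, hx.2, hy.2, one_mul]

variable [DecidableEq S]

lemma abs_payoff_shift_left_sub_le {A : S → S → ℝ}
    (hA : ∀ i j, A i j ∈ Set.Icc (0 : ℝ) 1) (x : S → ℝ) {y : S → ℝ}
    (hy : y ∈ simplex S) (c : ℝ) (s t : S) :
    |payoff A (x + c • (pureStrat s - pureStrat t)) y - payoff A x y| ≤ |c| := by
  have hs := payoff_mem_Icc hA (pureStrat_mem_simplex s) hy
  have ht := payoff_mem_Icc hA (pureStrat_mem_simplex t) hy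
  have hlin : payoff A (x + c • (pureStrat s - pureStrat t)) y - payoff A x y
      = c * (payoff A (pureStrat s) y - payoff A (pureStrat t) y) := by
    simp only [payoff_eq_dotProduct, add_dotProduct, smul_dotProduct, sub_dotProduct, smul_eq_mul]
    ring
  rw [hlin, abs_mul]
  exact mul_le_of_le_one_right (abs_nonneg c)
    (abs_sub_le_iff.mpr ⟨by linarith [hs.2, ht.1], by linarith [hs.1, ht.2]⟩)

lemma abs_payoff_shift_right_sub_le {A : S → S → ℝ}
    (hA : ∀ i j, A i j ∈ Set.Icc (0 : ℝ) 1) {x : S → ℝ} (hx : x ∈ simplex S)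
    (y : S → ℝ) (c : ℝ) (s t : S) :
    |payoff A x (y + c • (pureStrat s - pureStrat t)) - payoff A x y| ≤ |c| := by
  have hs := payoff_mem_Icc hA hx (pureStrat_mem_simplex s)
  have ht := payoff_mem_Icc hA hx (pureStrat_mem_simplex t)
  have hlin : payoff A x (y + c • (pureStrat s - pureStrat t)) - payoff A x y
      = c * (payoff A x (pureStrat s) - payoff A x (pureStrat t)) := by
    simp only [payoff_eq_dotProduct, mulVec_add, mulVec_smul, mulVec_sub, dotProduct_add,
      dotProduct_smul, dotProduct_sub, smul_eq_mul]
    ring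
  rw [hlin, abs_mul]
  exact mul_le_of_le_one_right (abs_nonneg c)
    (abs_sub_le_iff.mpr ⟨by linarith [hs.2, ht.1], by linarith [hs.1, ht.2]⟩)

lemma shift_mem_simplex {x : S → ℝ} (hx : x ∈ simplex S) {c : ℝ} {t : S} (hc : 0 ≤ c)
    (hct : c ≤ x t) (s : S) : x + c • (pureStrat s - pureStrat t) ∈ simplex S := by
  refine ⟨fun i => ?_, ?_⟩
  · have := hx.1 i
    simp only [Pi.add_apply, Pi.smul_apply, Pi.sub_apply, smul_eq_mul, pureStrat]
    split_ifs with his hit hit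
    · simpa
    · simp; linarith
    · subst hit; simp; linarith
    · simpa
  · simp [sum_add_distrib, hx.2, ← mul_sum, pureStrat]

lemma dist1_shift {s t : S} (hst : s ≠ t) (x : S → ℝ) (c : ℝ) :
    dist1 x (x + c • (pureStrat s - pureStrat t)) = 2 * |c| := by
  have hterm : ∀ i, |x i - (x + c • (pureStrat s - pureStrat t)) i|
      = |c| * (pureStrat s i + pureStrat t i) := by
    intro i
    simp only [Pi.add_apply, Pi.smul_apply, Pi.sub_apply, smul_eq_mul, sub_add_cancel_left,
      abs_neg, abs_mul, pureStrat]
    split_ifs with his hit hit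
    · exact absurd (his.symm.trans hit) hst
    all_goals simp
  simp only [dist1, hterm, ← mul_sum, sum_add_distrib, pureStrat, sum_ite_eq', mem_univ, if_true]
  ring

end

theorem stmt2 {n : ℕ} (hn : 2 ≤ n) (R C : Fin n → Fin n → ℝ)
    (hR : ∀ i j, R i j ∈ Set.Icc (0 : ℝ) 1) (hC : ∀ i j, C i j ∈ Set.Icc (0 : ℝ) 1)
    (z : Fin n → ℝ) (hNash : IsEpsNash R C z z 0)
    (δ : ℝ) (hδ : 0 < δ) (t : Fin n) (ht : δ ≤ z t) :
    ∃ zm : Fin n → ℝ, zm ∈ simplex (Fin n) ∧ dist1 z zm ≥ 2 * δ ∧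
      IsEpsNash R C zm z (2 * δ) ∧ IsEpsNash R C z zm (2 * δ) := by
  obtain ⟨hz, -, hRz, hCz⟩ := hNash
  obtain ⟨s, hst⟩ : ∃ s, s ≠ t := Fintype.exists_ne_of_one_lt_card (by simp; omega) t
  set zm := z + δ • (pureStrat s - pureStrat t)
  have hzm : zm ∈ simplex (Fin n) := shift_mem_simplex hz hδ.le ht s
  have hleft {A : Fin n → Fin n → ℝ} (hA : ∀ i j, A i j ∈ Set.Icc (0 : ℝ) 1)
      {y : Fin n → ℝ} (hy : y ∈ simplex (Fin n)) :
      payoff A zm y - payoff A z y ≤ δ ∧ payoff A z y - payoff A zm y ≤ δ :=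
    abs_sub_le_iff.mp (abs_of_pos hδ ▸ abs_payoff_shift_left_sub_le hA z hy δ s t)
  have hright {A : Fin n → Fin n → ℝ} (hA : ∀ i j, A i j ∈ Set.Icc (0 : ℝ) 1)
      {x : Fin n → ℝ} (hx : x ∈ simplex (Fin n)) :
      payoff A x zm - payoff A x z ≤ δ ∧ payoff A x z - payoff A x zm ≤ δ :=
    abs_sub_le_iff.mp (abs_of_pos hδ ▸ abs_payoff_shift_right_sub_le hA hx z δ s t)
  have hpure := pureStrat_mem_simplex (S := Fin n)
  refine ⟨zm, hzm, by rw [dist1_shift hst, abs_of_pos hδ],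
    ⟨hzm, hz, fun u => ?_, fun u => ?_⟩, ⟨hz, hzm, fun u => ?_, fun u => ?_⟩⟩
  · linarith [hRz u, (hleft hR hz).2]
  · linarith [hCz u, (hleft hC hz).2, (hleft hC (hpure u)).1]
  · linarith [hRz u, (hright hR hz).2, (hright hR (hpure u)).1]
  · linarith [hCz u, (hright hC hz).2]
end

section
/- Let G be a bi-matrix game on n pure strategies with all payoff entries in [0,1], let M > 0, and let (x*, y*) be a Nash equilibrium of the diagonally modified game D^M(G) in which at least one of x*, y* is not fully mixed (i.e. has some coordinate equal to 0). Then for every pure strategy t with x*ₜ > 0 and y*ₜ > 0, we have min(x*ₜ, y*ₜ) < 1/M. -/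
open Finset

/-- The diagonally modified payoff matrix: all diagonal entries replaced by `-M`. -/
def diagMod {n : ℕ} (A : Fin n → Fin n → ℝ) (M : ℝ) : Fin n → Fin n → ℝ :=
  fun i j => if i = j then -M else A i j

/- If some coordinate `xᵢ` vanishes, the column player can secure `0` by playing `i`, since the
only negative entry `-M` of column `i` is weighted by `xᵢ = 0`; so the equilibrium value is `≥ 0`.
A strategy `t` in the support of `y` earns exactly that value, while against `x` it earns at most
`(1 - xₜ) - M xₜ`. Hence `(1 + M) xₜ ≤ 1`. The case `yᵢ = 0` is the same argument for the row
player, obtained by transposing the game. -/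

section Payoff

variable {S : Type*} [Fintype S]

lemma payoff_transpose (A : S → S → ℝ) (x y : S → ℝ) :
    payoff (fun i j => A j i) y x = payoff A x y := by
  simp only [payoff]
  rw [Finset.sum_comm]
  exact Finset.sum_congr rfl fun _ _ => Finset.sum_congr rfl fun _ _ => by ring

lemma eq_of_forall_le_of_sum_mul_eq {w g : S → ℝ} {c : ℝ} (hw : w ∈ simplex S)
    (hle : ∀ k, g k ≤ c) (hsum : ∑ k, w k * g k = c) {t : S} (ht : 0 < w t) : g t = c := by
  have hgap : ∑ k, w k * (c - g k) = 0 := by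
    simp only [mul_sub, Finset.sum_sub_distrib, ← Finset.sum_mul, hw.2, hsum]
    ring
  have hgap_nonneg : ∀ k ∈ Finset.univ, 0 ≤ w k * (c - g k) :=
    fun k _ => mul_nonneg (hw.1 k) (sub_nonneg.mpr (hle k))
  have := (Finset.sum_eq_zero_iff_of_nonneg hgap_nonneg).mp hgap t (Finset.mem_univ t)
  nlinarith

variable [DecidableEq S]

lemma IsEpsNash.transpose {R C : S → S → ℝ} {x y : S → ℝ} {ε : ℝ}
    (h : IsEpsNash R C x y ε) :
    IsEpsNash (fun i j => C j i) (fun i j => R j i) y x ε := by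
  obtain ⟨hx, hy, hrow, hcol⟩ := h
  refine ⟨hy, hx, fun s => ?_, fun s => ?_⟩ <;> simp only [payoff_transpose]
  exacts [hcol s, hrow s]

lemma payoff_pureStrat_right (A : S → S → ℝ) (x : S → ℝ) (k : S) :
    payoff A x (pureStrat k) = ∑ j, x j * A j k := by
  simp [payoff, pureStrat]

lemma payoff_eq_sum_payoff_pureStrat_right (A : S → S → ℝ) (x y : S → ℝ) :
    payoff A x y = ∑ k, y k * payoff A x (pureStrat k) := by
  simp only [payoff_pureStrat_right, Finset.mul_sum]
  rw [payoff, Finset.sum_comm]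
  exact Finset.sum_congr rfl fun _ _ => Finset.sum_congr rfl fun _ _ => by ring

lemma IsEpsNash.payoff_pureStrat_right_eq {R C : S → S → ℝ} {x y : S → ℝ}
    (h : IsEpsNash R C x y 0) {t : S} (ht : 0 < y t) :
    payoff C x (pureStrat t) = payoff C x y :=
  eq_of_forall_le_of_sum_mul_eq h.2.1 (fun k => by simpa using h.2.2.2 k)
    (payoff_eq_sum_payoff_pureStrat_right C x y).symm ht

end Payoff

section DiagMod

variable {n : ℕ} {C : Fin n → Fin n → ℝ} {M : ℝ} {x : Fin n → ℝ}

lemma diagMod_transpose (A : Fin n → Fin n → ℝ) (M : ℝ) :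
    diagMod (fun i j => A j i) M = fun i j => diagMod A M j i := by
  ext i j
  simp [diagMod, eq_comm]

lemma payoff_diagMod_pureStrat_nonneg (hC : ∀ i j, 0 ≤ C i j) (hx : ∀ j, 0 ≤ x j)
    {i : Fin n} (hi : x i = 0) : 0 ≤ payoff (diagMod C M) x (pureStrat i) := by
  rw [payoff_pureStrat_right]
  refine Finset.sum_nonneg fun j _ => ?_
  rcases eq_or_ne j i with rfl | hji
  · simp [hi]
  · simpa [diagMod, hji] using mul_nonneg (hx j) (hC j i)

lemma payoff_diagMod_pureStrat_le (hC : ∀ i j, C i j ≤ 1) (hx : x ∈ simplex (Fin n))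
    (t : Fin n) : payoff (diagMod C M) x (pureStrat t) ≤ (1 - x t) - M * x t := by
  have hoff : ∑ j ∈ Finset.univ.erase t, x j * diagMod C M j t ≤ 1 - x t := by
    rw [← hx.2, ← Finset.sum_erase_add _ _ (Finset.mem_univ t), add_sub_cancel_right]
    refine Finset.sum_le_sum fun j hj => ?_
    simpa [diagMod, Finset.ne_of_mem_erase hj] using
      mul_le_of_le_one_right (hx.1 j) (hC j t)
  have hdiag : diagMod C M t t = -M := if_pos rfl
  rw [payoff_pureStrat_right, ← Finset.sum_erase_add _ _ (Finset.mem_univ t), hdiag]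
  linarith

lemma IsEpsNash.mul_le_one_of_diagMod {R : Fin n → Fin n → ℝ} {y : Fin n → ℝ}
    (hC : ∀ i j, C i j ∈ Set.Icc (0 : ℝ) 1) (h : IsEpsNash R (diagMod C M) x y 0)
    {i : Fin n} (hi : x i = 0) {t : Fin n} (ht : 0 < y t) : (1 + M) * x t ≤ 1 := by
  have hvalue : 0 ≤ payoff (diagMod C M) x y := by simpa using
    (payoff_diagMod_pureStrat_nonneg (fun i j => (hC i j).1) h.1.1 hi).trans (h.2.2.2 i)
  have hpayoff_t := payoff_diagMod_pureStrat_le (M := M) (fun i j => (hC i j).2) h.1 t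
  rw [h.payoff_pureStrat_right_eq ht] at hpayoff_t
  linarith

end DiagMod

theorem stmt7 {n : ℕ} (R C : Fin n → Fin n → ℝ)
    (hR : ∀ i j, R i j ∈ Set.Icc (0 : ℝ) 1) (hC : ∀ i j, C i j ∈ Set.Icc (0 : ℝ) 1)
    (M : ℝ) (hM : 0 < M) (x y : Fin n → ℝ)
    (hNash : IsEpsNash (diagMod R M) (diagMod C M) x y 0)
    (hnotfull : (∃ i, x i = 0) ∨ (∃ i, y i = 0)) :
    ∀ t, 0 < x t → 0 < y t → min (x t) (y t) < 1 / M := by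
  intro t hxt hyt
  rw [lt_div_iff₀ hM]
  rcases hnotfull with ⟨i, hi⟩ | ⟨i, hi⟩
  · have hx_t := hNash.mul_le_one_of_diagMod hC hi hyt
    nlinarith [min_le_left (x t) (y t)]
  · have hNash' := hNash.transpose
    rw [← diagMod_transpose, ← diagMod_transpose] at hNash'
    have hy_t := hNash'.mul_le_one_of_diagMod (fun i j => hR j i) hi hxt
    nlinarith [min_le_right (x t) (y t)]
end

section
/- Let φ be a 3CNF formula with n ≥ 4 variables and ε = 1/(2n³). In any ε-Nash equilibrium (x, y) of SV(φ) in which both players' expected payoffs are at least n − 1 − ε, each player assigns total probability at most ε to the strategies in V ∪ C (variables and clauses). -/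
open Finset

/-- A literal over `n` variables: a variable together with a sign
(`true` = the positive literal, `false` = the negated literal). -/
abbrev Lit (n : ℕ) := Fin n × Bool

/-- Negation of a literal. -/
def negLit {n : ℕ} (l : Lit n) : Lit n := (l.1, !l.2)

/-- A 3CNF formula with `n` variables and `m` clauses; each clause is a set of
exactly 3 literals. -/
structure CNF3 (n m : ℕ) where
  clause : Fin m → Finset (Lit n)
  card3 : ∀ c, (clause c).card = 3

/-- An assignment `a` satisfies a clause if some literal of the clause is true under `a`. -/
def SatAssign {n m : ℕ} (φ : CNF3 n m) (a : Fin n → Bool) : Prop :=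
  ∀ c, ∃ l ∈ φ.clause c, a l.1 = l.2

/-- Satisfiability of a 3CNF formula. -/
def CNF3.Satisfiable {n m : ℕ} (φ : CNF3 n m) : Prop :=
  ∃ a : Fin n → Bool, SatAssign φ a

/-- Strategy set of the game `SV(φ)`: literals, variables, and clauses. -/
abbrev SVStrat (n m : ℕ) := Lit n ⊕ (Fin n ⊕ Fin m)

/-- The row player's payoff in the game `SV(φ)`. -/
def svU1 {n m : ℕ} (φ : CNF3 n m) : SVStrat n m → SVStrat n m → ℝ
  | Sum.inl a, Sum.inl b => if a = negLit b then (n : ℝ) - 4 else (n : ℝ) - 1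
  | Sum.inl _, Sum.inr _ => (n : ℝ) - 4
  | Sum.inr (Sum.inl w), Sum.inl l => if l.1 = w then 0 else (n : ℝ)
  | Sum.inr (Sum.inr c), Sum.inl l => if l ∈ φ.clause c then 0 else (n : ℝ)
  | Sum.inr _, Sum.inr _ => (n : ℝ) - 4

/-- The column player's payoff in the symmetric game `SV(φ)`. -/
def svU2 {n m : ℕ} (φ : CNF3 n m) (a b : SVStrat n m) : ℝ := svU1 φ b a

/-!
Since `u₁(a, b) + u₁(b, a) ≤ s(a) + s(b)` with `s = n - 1` on literals and `s = n - 3` on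
`V ∪ C`, the sum of the two expected payoffs is at most `2 (n - 1) - 2 (q + p)`, where `q` and
`p` are the masses the players put on `V ∪ C`. Both payoffs being at least `n - 1 - ε` then
forces `q + p ≤ ε`.
-/

lemma payoff_add_payoff_le {S : Type*} [Fintype S] {R C : S → S → ℝ} {a b : S → ℝ}
    (hRC : ∀ i j, R i j + C i j ≤ a i + b j) {x y : S → ℝ}
    (hx : x ∈ simplex S) (hy : y ∈ simplex S) :
    payoff R x y + payoff C x y ≤ ∑ i, x i * a i + ∑ j, y j * b j := by
  obtain ⟨hx0, hx1⟩ := hx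
  obtain ⟨hy0, hy1⟩ := hy
  calc payoff R x y + payoff C x y
      = ∑ i, ∑ j, x i * y j * (R i j + C i j) := by
        simp only [payoff, ← sum_add_distrib, mul_add]
    _ ≤ ∑ i, ∑ j, x i * y j * (a i + b j) :=
        sum_le_sum fun i _ => sum_le_sum fun j _ =>
          mul_le_mul_of_nonneg_left (hRC i j) (mul_nonneg (hx0 i) (hy0 j))
    _ = (∑ i, x i * a i) * ∑ j, y j + (∑ i, x i) * ∑ j, y j * b j := by
        rw [sum_mul_sum, sum_mul_sum, ← sum_add_distrib]
        refine sum_congr rfl fun i _ => ?_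
        rw [← sum_add_distrib]
        exact sum_congr rfl fun j _ => by ring
    _ = ∑ i, x i * a i + ∑ j, y j * b j := by rw [hx1, hy1, mul_one, one_mul]

namespace SV

variable {n m : ℕ}

def share (n m : ℕ) : SVStrat n m → ℝ :=
  Sum.elim (fun _ => (n : ℝ) - 1) (fun _ => (n : ℝ) - 3)

lemma svU1_add_svU1_swap_le (φ : CNF3 n m) (i j : SVStrat n m) :
    svU1 φ i j + svU1 φ j i ≤ share n m i + share n m j := by
  rcases i with a | (w | c) <;> rcases j with b | (w' | c') <;>
    simp only [svU1, share, Sum.elim_inl, Sum.elim_inr] <;>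
    (try split_ifs) <;> linarith [(n.cast_nonneg : (0 : ℝ) ≤ n)]

lemma sum_mul_share {x : SVStrat n m → ℝ} (hx : x ∈ simplex (SVStrat n m)) :
    ∑ i, x i * share n m i = (n : ℝ) - 1 - 2 * ∑ s : Fin n ⊕ Fin m, x (Sum.inr s) := by
  have hx1 := hx.2
  rw [Fintype.sum_sum_type] at hx1 ⊢
  simp only [share, Sum.elim_inl, Sum.elim_inr, ← sum_mul] at hx1 ⊢
  linear_combination ((n : ℝ) - 1) * hx1

end SV

theorem stmt13_general {n m : ℕ} (φ : CNF3 n m)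
    (ε : ℝ)
    (x y : SVStrat n m → ℝ)
    (hNash : IsEpsNash (svU1 φ) (svU2 φ) x y ε)
    (hx : (n : ℝ) - 1 - ε ≤ payoff (svU1 φ) x y)
    (hy : (n : ℝ) - 1 - ε ≤ payoff (svU2 φ) x y) :
    (∑ s : Fin n ⊕ Fin m, x (Sum.inr s)) ≤ ε ∧
    (∑ s : Fin n ⊕ Fin m, y (Sum.inr s)) ≤ ε := by
  obtain ⟨hxS, hyS, -, -⟩ := hNash
  have htotal := payoff_add_payoff_le (C := svU2 φ) (SV.svU1_add_svU1_swap_le φ) hxS hyS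
  rw [SV.sum_mul_share hxS, SV.sum_mul_share hyS] at htotal
  have hq : 0 ≤ ∑ s : Fin n ⊕ Fin m, x (Sum.inr s) := sum_nonneg fun s _ => hxS.1 _
  have hp : 0 ≤ ∑ s : Fin n ⊕ Fin m, y (Sum.inr s) := sum_nonneg fun s _ => hyS.1 _
  constructor <;> linarith

theorem stmt13 {n m : ℕ} (hn : 4 ≤ n) (φ : CNF3 n m)
    (ε : ℝ) (hε : ε = 1 / (2 * (n : ℝ) ^ 3))
    (x y : SVStrat n m → ℝ)
    (hNash : IsEpsNash (svU1 φ) (svU2 φ) x y ε)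
    (hx : (n : ℝ) - 1 - ε ≤ payoff (svU1 φ) x y)
    (hy : (n : ℝ) - 1 - ε ≤ payoff (svU2 φ) x y) :
    (∑ s : Fin n ⊕ Fin m, x (Sum.inr s)) ≤ ε ∧
    (∑ s : Fin n ⊕ Fin m, y (Sum.inr s)) ≤ ε :=
  stmt13_general φ ε x y hNash hx hy
end

section
/- Let φ be a 3CNF formula with n ≥ 4 variables and ε = 1/(2n³). In any ε-Nash equilibrium (x, y) of SV(φ) in which both players' expected payoffs are at least n − 1 − ε, for every literal l ∈ L the total probability that the row player assigns to {l, −l} is at least 1/n − 2ε, and likewise for the column player. -/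
/-!
Write `r(x)` for the mass a strategy puts on variables and clauses. Against `y`, a literal row
earns at most `n - 1 - 3 r(y)` and a variable or clause row at most `n - 4 r(y)`, so
`U₁(x, y) ≤ n - 1 - 3 r(y) + r(x)` and symmetrically for `U₂`. Both payoffs being at least
`n - 1 - ε` forces `r(x) + r(y) ≤ ε`. Deviating to the variable `w` earns
`n (1 - r(y) - p_w) + (n - 4) r(y)`, where `p_w` is the mass `y` puts on `{w, -w}`; since this is at
most `U₁(x, y) + ε`, we get `n p_w ≥ 1 - 2ε`.
-/

open Finset

section Bimatrix

variable {S : Type*} [Fintype S]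

lemma payoff_pureStrat_left [DecidableEq S] (A : S → S → ℝ) (s : S) (y : S → ℝ) :
    payoff A (pureStrat s) y = ∑ j, y j * A s j := by
  simp [payoff, pureStrat, mul_comm]

lemma payoff_eq_sum_mul_payoff_pureStrat [DecidableEq S] (A : S → S → ℝ) (x y : S → ℝ) :
    payoff A x y = ∑ i, x i * payoff A (pureStrat i) y := by
  rw [payoff]
  simp only [payoff_pureStrat_left, mul_sum, mul_assoc]

lemma payoff_swap (A : S → S → ℝ) (x y : S → ℝ) :
    payoff (fun a b => A b a) x y = payoff A y x := by
  unfold payoff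
  rw [sum_comm]
  simp only [mul_comm (x _)]

lemma IsEpsNash.swap [DecidableEq S] {R C : S → S → ℝ} {x y : S → ℝ} {ε : ℝ}
    (h : IsEpsNash R C x y ε) : IsEpsNash (fun a b => C b a) (fun a b => R b a) y x ε := by
  obtain ⟨hx, hy, hR, hC⟩ := h
  refine ⟨hy, hx, fun s => ?_, fun s => ?_⟩ <;> simp only [payoff_swap]
  exacts [hC s, hR s]

end Bimatrix

lemma sum_sum_type_mul_le {α β : Type*} [Fintype α] [Fintype β] {y g : α ⊕ β → ℝ}
    (hy : ∀ j, 0 ≤ y j) {p q : ℝ} (hp : ∀ a, g (.inl a) ≤ p) (hq : ∀ b, g (.inr b) ≤ q) :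
    ∑ j, y j * g j ≤ p * ∑ a, y (.inl a) + q * ∑ b, y (.inr b) := by
  rw [Fintype.sum_sum_type, mul_sum, mul_sum]
  refine add_le_add (sum_le_sum fun a _ => ?_) (sum_le_sum fun b _ => ?_)
  · rw [mul_comm p]; exact mul_le_mul_of_nonneg_left (hp a) (hy _)
  · rw [mul_comm q]; exact mul_le_mul_of_nonneg_left (hq b) (hy _)

section SV

variable {n m : ℕ} (φ : CNF3 n m) {x y : SVStrat n m → ℝ}

def nonLitMass (x : SVStrat n m → ℝ) : ℝ := ∑ t, x (Sum.inr t)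

def varMass (x : SVStrat n m → ℝ) (w : Fin n) : ℝ := x (Sum.inl (w, true)) + x (Sum.inl (w, false))

lemma add_negLit_eq_varMass (x : SVStrat n m → ℝ) (l : Lit n) :
    x (Sum.inl l) + x (Sum.inl (negLit l)) = varMass x l.1 := by
  obtain ⟨w, _ | _⟩ := l <;> simp [varMass, negLit, add_comm]

lemma nonLitMass_nonneg (hx : x ∈ simplex (SVStrat n m)) : 0 ≤ nonLitMass x :=
  sum_nonneg fun _ _ => hx.1 _

lemma sum_lit_eq_one_sub_nonLitMass (hx : x ∈ simplex (SVStrat n m)) :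
    ∑ l, x (Sum.inl l) = 1 - nonLitMass x := by
  have h := hx.2
  rw [Fintype.sum_sum_type] at h
  rw [nonLitMass]
  linarith

lemma payoff_svU1_pureStrat_lit_le (hy : y ∈ simplex (SVStrat n m)) (a : Lit n) :
    payoff (svU1 φ) (pureStrat (Sum.inl a)) y ≤ n - 1 - 3 * nonLitMass y := by
  have h := sum_sum_type_mul_le hy.1 (g := svU1 φ (Sum.inl a)) (p := n - 1) (q := n - 4)
    (fun l => by simp only [svU1]; split_ifs <;> linarith) (fun _ => le_rfl)
  rw [sum_lit_eq_one_sub_nonLitMass hy] at h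
  rw [payoff_pureStrat_left, ← nonLitMass] at *
  linarith

lemma payoff_svU1_pureStrat_nonLit_le (hy : y ∈ simplex (SVStrat n m)) (t : Fin n ⊕ Fin m) :
    payoff (svU1 φ) (pureStrat (Sum.inr t)) y ≤ n - 4 * nonLitMass y := by
  have hn : (0 : ℝ) ≤ n := n.cast_nonneg
  have h := sum_sum_type_mul_le hy.1 (g := svU1 φ (Sum.inr t)) (p := n) (q := n - 4)
    (fun l => by rcases t with _ | _ <;> simp only [svU1] <;> split_ifs <;> linarith)
    (fun s => by rcases t with _ | _ <;> exact le_rfl)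
  rw [sum_lit_eq_one_sub_nonLitMass hy] at h
  rw [payoff_pureStrat_left, ← nonLitMass] at *
  linarith

lemma payoff_svU1_le (hx : x ∈ simplex (SVStrat n m)) (hy : y ∈ simplex (SVStrat n m)) :
    payoff (svU1 φ) x y ≤ n - 1 - 3 * nonLitMass y + nonLitMass x := by
  have h := sum_sum_type_mul_le hx.1 (g := fun i => payoff (svU1 φ) (pureStrat i) y)
    (payoff_svU1_pureStrat_lit_le φ hy) (payoff_svU1_pureStrat_nonLit_le φ hy)
  rw [sum_lit_eq_one_sub_nonLitMass hx, ← nonLitMass] at h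
  rw [payoff_eq_sum_mul_payoff_pureStrat]
  nlinarith [mul_nonneg (nonLitMass_nonneg hx) (nonLitMass_nonneg hy)]

lemma payoff_svU1_pureStrat_var (hy : y ∈ simplex (SVStrat n m)) (w : Fin n) :
    payoff (svU1 φ) (pureStrat (Sum.inr (Sum.inl w))) y =
      n * (1 - nonLitMass y - varMass y w) + (n - 4) * nonLitMass y := by
  have hlit : ∀ l : Lit n, y (Sum.inl l) * svU1 φ (Sum.inr (Sum.inl w)) (Sum.inl l) =
      n * y (Sum.inl l) - n * if l.1 = w then y (Sum.inl l) else 0 := by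
    intro l; simp only [svU1]; split_ifs <;> ring
  have hvar : ∑ l : Lit n, (if l.1 = w then y (Sum.inl l) else 0) = varMass y w := by
    simp [varMass, Fintype.sum_prod_type, sum_add_distrib, add_comm]
  rw [payoff_pureStrat_left, Fintype.sum_sum_type, sum_congr rfl fun l _ => hlit l,
    sum_sub_distrib, ← mul_sum, ← mul_sum, hvar, sum_lit_eq_one_sub_nonLitMass hy, nonLitMass,
    mul_sum]
  congr 1
  · ring
  · exact sum_congr rfl fun t _ => by rcases t with _ | _ <;> exact mul_comm _ _

lemma nonLitMass_add_le (hx : x ∈ simplex (SVStrat n m)) (hy : y ∈ simplex (SVStrat n m))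
    {ε : ℝ} (hxy : n - 1 - ε ≤ payoff (svU1 φ) x y) (hyx : n - 1 - ε ≤ payoff (svU1 φ) y x) :
    nonLitMass x + nonLitMass y ≤ ε := by
  linarith [payoff_svU1_le φ hx hy, payoff_svU1_le φ hy hx]

lemma IsEpsNash.one_div_sub_two_mul_le_varMass {ε : ℝ} (h : IsEpsNash (svU1 φ) (svU2 φ) x y ε)
    (hxy : n - 1 - ε ≤ payoff (svU1 φ) x y) (hyx : n - 1 - ε ≤ payoff (svU1 φ) y x) (w : Fin n) :
    1 / n - 2 * ε ≤ varMass y w := by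
  obtain ⟨hx, hy, hdev, -⟩ := h
  have hmass := nonLitMass_add_le φ hx hy hxy hyx
  have hε : 0 ≤ ε := by linarith [nonLitMass_nonneg hx, nonLitMass_nonneg hy]
  have hn : (1 : ℝ) ≤ n := Nat.one_le_cast.mpr w.pos
  have hdev_var := hdev (Sum.inr (Sum.inl w))
  rw [payoff_svU1_pureStrat_var φ hy] at hdev_var
  have hU := payoff_svU1_le φ hx hy
  calc 1 / n - 2 * ε ≤ (1 - 2 * ε) / n := by
        rw [sub_div]; gcongr; exact div_le_self (by positivity) hn
    _ ≤ varMass y w := by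
        rw [div_le_iff₀ (by positivity)]; linarith

end SV

theorem stmt14_general {n m : ℕ} (φ : CNF3 n m)
    (ε : ℝ)
    (x y : SVStrat n m → ℝ)
    (hNash : IsEpsNash (svU1 φ) (svU2 φ) x y ε)
    (hx : (n : ℝ) - 1 - ε ≤ payoff (svU1 φ) x y)
    (hy : (n : ℝ) - 1 - ε ≤ payoff (svU2 φ) x y) :
    ∀ l : Lit n,
      1 / (n : ℝ) - 2 * ε ≤ x (Sum.inl l) + x (Sum.inl (negLit l)) ∧
      1 / (n : ℝ) - 2 * ε ≤ y (Sum.inl l) + y (Sum.inl (negLit l)) := by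
  have hNash_swap : IsEpsNash (svU1 φ) (svU2 φ) y x ε := hNash.swap
  have hyx : (n : ℝ) - 1 - ε ≤ payoff (svU1 φ) y x := payoff_swap (svU1 φ) x y ▸ hy
  intro l
  rw [add_negLit_eq_varMass, add_negLit_eq_varMass]
  exact ⟨hNash_swap.one_div_sub_two_mul_le_varMass φ hyx hx l.1,
    hNash.one_div_sub_two_mul_le_varMass φ hx hyx l.1⟩

theorem stmt14 {n m : ℕ} (hn : 4 ≤ n) (φ : CNF3 n m)
    (ε : ℝ) (hε : ε = 1 / (2 * (n : ℝ) ^ 3))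
    (x y : SVStrat n m → ℝ)
    (hNash : IsEpsNash (svU1 φ) (svU2 φ) x y ε)
    (hx : (n : ℝ) - 1 - ε ≤ payoff (svU1 φ) x y)
    (hy : (n : ℝ) - 1 - ε ≤ payoff (svU2 φ) x y) :
    ∀ l : Lit n,
      1 / (n : ℝ) - 2 * ε ≤ x (Sum.inl l) + x (Sum.inl (negLit l)) ∧
      1 / (n : ℝ) - 2 * ε ≤ y (Sum.inl l) + y (Sum.inl (negLit l)) :=
  stmt14_general φ ε x y hNash hx hy
end
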